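/- Suppose G is join-irreducible. Then for every x in the frontier of R(G) (taken in ℝ^V) with x_v > 0 for all v ∈ V, one has 𝕶_G(x) = 0, 𝕶_{G,V'}(x) > 0 for every proper subset V' ⊊ V, and ∂_j 𝕶_G(x) < 0 for every j ∈ V; in particular the gradient of 𝕶_G does not vanish at x. (Proposition 4.6.) -/

import Mathlib

open scoped Classical ENNReal

set_option linter.unusedSectionVars false

variable {V : Type*} [Fintype V] [DecidableEq V]

/-- An admissible swap exchanges two consecutive letters that are adjacent in `G`. -/
def AdjSwap (G : SimpleGraph V) (w w' : List V) : Prop :=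
  ∃ (a b : List V) (u v : V), G.Adj u v ∧ w = a ++ u :: v :: b ∧ w' = a ++ v :: u :: b

/-- Two words are equivalent if one can be transformed into the other by finitely many
admissible swaps. -/
def WordEquiv (G : SimpleGraph V) : List V → List V → Prop :=
  Relation.ReflTransGen (AdjSwap G)

lemma adjSwap_symm (G : SimpleGraph V) : Symmetric (AdjSwap G) := by
  rintro w w' ⟨a, b, u, v, h, rfl, rfl⟩
  exact ⟨a, b, v, u, h.symm, rfl, rfl⟩

/-- The setoid of words modulo admissible swaps. -/
def wordSetoid (G : SimpleGraph V) : Setoid (List V) where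
  r := WordEquiv G
  iseqv := ⟨fun _ => Relation.ReflTransGen.refl,
    fun h => by
      induction h with
      | refl => exact Relation.ReflTransGen.refl
      | tail _ hs ih => exact Relation.ReflTransGen.head (adjSwap_symm G hs) ih,
    fun h h' => Relation.ReflTransGen.trans h h'⟩

/-- A word is `G`-reduced if between any two equal letters there is a letter distinct from
them and not adjacent to them. -/
def IsGReduced (G : SimpleGraph V) (w : List V) : Prop :=
  ∀ i j : Fin w.length, i < j → w.get i = w.get j →
    ∃ k : Fin w.length, i < k ∧ k < j ∧ w.get k ≠ w.get i ∧ ¬ G.Adj (w.get k) (w.get i)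

/-- The product `x_{w_1} ⋯ x_{w_ℓ}` depends only on the equivalence class of a word. -/
noncomputable def classProd (G : SimpleGraph V) (x : V → ℝ≥0∞) :
    Quotient (wordSetoid G) → ℝ≥0∞ :=
  Quotient.lift (fun w : List V => (w.map x).prod) (by
    intro a b h
    induction h with
    | refl => rfl
    | tail _ hs ih =>
        obtain ⟨a', b', u, v, huv, rfl, rfl⟩ := hs
        rw [ih]
        simp only [List.map_append, List.prod_append, List.map_cons, List.prod_cons]
        ring)

/-- `tildeF G x` : the sum over all equivalence classes of words of `∏ x_{w_i}`,
valued in `[0,∞]`. -/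
noncomputable def tildeF (G : SimpleGraph V) (x : V → ℝ) : ℝ≥0∞ :=
  ∑' c : Quotient (wordSetoid G), classProd G (fun v => ENNReal.ofReal (x v)) c

/-- `redF G x` : the sum over all equivalence classes of `G`-reduced words of `∏ x_{w_i}`,
valued in `[0,∞]`. -/
noncomputable def redF (G : SimpleGraph V) (x : V → ℝ) : ℝ≥0∞ :=
  ∑' c : {c : Quotient (wordSetoid G) // ∃ w, IsGReduced G w ∧ Quotient.mk (wordSetoid G) w = c},
    classProd G (fun v => ENNReal.ofReal (x v)) c.1

/-- The clique polynomial `𝕶_{G,V'}(x) = ∑_{cliques K ⊆ V'} (-1)^{|K|} ∏_{v ∈ K} x_v`. -/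
noncomputable def cliquePoly (G : SimpleGraph V) (V' : Finset V) (x : V → ℝ) : ℝ :=
  ∑ K ∈ V'.powerset.filter (fun K : Finset V => G.IsClique (K : Set V)),
    (-1 : ℝ) ^ K.card * ∏ v ∈ K, x v

/-- The Euclidean norm on `ℝ^V`. -/
noncomputable def eucNorm (x : V → ℝ) : ℝ := Real.sqrt (∑ v, x v ^ 2)

/-- `min_{V' ⊆ V} 𝕶_{G,V'}(x)`. -/
noncomputable def minK (G : SimpleGraph V) (x : V → ℝ) : ℝ :=
  Finset.univ.inf' ⟨∅, Finset.mem_univ _⟩ fun V' : Finset V => cliquePoly G V' x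

/-- `ρ(u) = inf {r ∈ [0,∞) : min_{V' ⊆ V} 𝕶_{G,V'}(r·u) = 0}`. -/
noncomputable def rho (G : SimpleGraph V) (u : V → ℝ) : ℝ :=
  sInf {r : ℝ | 0 ≤ r ∧ minK G (r • u) = 0}

/-- The region `R(G) = {x ∈ [0,1]^V : 𝕶_{G,V'}(x) > 0 for all V' ⊆ V}`. -/
def regionR (G : SimpleGraph V) : Set (V → ℝ) :=
  {x | (∀ v, x v ∈ Set.Icc (0 : ℝ) 1) ∧ ∀ V' : Finset V, 0 < cliquePoly G V' x}

/-!
On the closure of `R(G)` every `𝕶_{G,W}` is nonnegative, and a positive point of `R(G)`'s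
closure where all of them are positive is interior; so at a positive frontier point some
`𝕶_{G,W}(x)` vanishes, and we take `W` inclusion-minimal with this property. The
deletion identity `𝕶_{G,W} = 𝕶_{G,W∖j} − x_j 𝕶_{G,N(j)∩(W∖j)}` applied to `W ∪ {j}`,
`j ∉ W`, gives `0 ≤ −x_j 𝕶_{G,N(j)∩W}(x)`, so by minimality `N(j) ⊇ W`. Join-irreducibility
then forces `W = V`. The same identity shows `∂_j 𝕶_G = −𝕶_{G,N(j)}`, which is negative
because `N(j)` is a proper subset of `V`.
-/

section

variable (G : SimpleGraph V)

lemma cliquePoly_empty (x : V → ℝ) : cliquePoly G ∅ x = 1 := by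
  simp [cliquePoly, Finset.filter_singleton]

lemma cliquePoly_eq_erase_sub_mul {W : Finset V} {j : V} (hj : j ∈ W) (x : V → ℝ) :
    cliquePoly G W x = cliquePoly G (W.erase j) x -
      x j * cliquePoly G ((W.erase j).filter (G.Adj j)) x := by
  unfold cliquePoly
  rw [← Finset.sum_filter_add_sum_filter_not _ (fun K => j ∉ K)]
  have h_without : (W.powerset.filter fun K : Finset V => G.IsClique (K : Set V)).filter
      (fun K => j ∉ K) =
      (W.erase j).powerset.filter fun K : Finset V => G.IsClique (K : Set V) := by
    ext K
    simp only [Finset.mem_filter, Finset.mem_powerset, Finset.subset_erase]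
    tauto
  -- cliques through `j` are `insert j K` for cliques `K` of the neighbourhood of `j`
  have h_with : ∑ K ∈ (W.powerset.filter fun K : Finset V => G.IsClique (K : Set V)).filter
      (fun K => ¬ j ∉ K), (-1 : ℝ) ^ K.card * ∏ v ∈ K, x v =
      ∑ K ∈ ((W.erase j).filter (G.Adj j)).powerset.filter
        (fun K : Finset V => G.IsClique (K : Set V)),
        -x j * ((-1 : ℝ) ^ K.card * ∏ v ∈ K, x v) := by
    refine Finset.sum_nbij' (fun K => K.erase j) (insert j) ?_ ?_ ?_ ?_ ?_ <;>
      simp only [Finset.mem_filter, Finset.mem_powerset, not_not]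
    · rintro K ⟨⟨hKW, hK⟩, hjK⟩
      refine ⟨fun v hv => ?_, hK.subset (by simp)⟩
      obtain ⟨hvj, hvK⟩ := Finset.mem_erase.1 hv
      exact Finset.mem_filter.2 ⟨Finset.mem_erase.2 ⟨hvj, hKW hvK⟩, hK hjK hvK hvj.symm⟩
    · rintro K ⟨hKN, hK⟩
      refine ⟨⟨Finset.insert_subset hj fun v hv => ?_, ?_⟩, Finset.mem_insert_self _ _⟩
      · exact Finset.mem_of_mem_erase (Finset.mem_filter.1 (hKN hv)).1
      · rw [Finset.coe_insert]
        exact hK.insert fun v hv _ => (Finset.mem_filter.1 (hKN hv)).2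
    · rintro K ⟨-, hjK⟩
      exact Finset.insert_erase hjK
    · rintro K ⟨hKN, -⟩
      exact Finset.erase_insert fun hjK => G.irrefl (Finset.mem_filter.1 (hKN hjK)).2
    · rintro K ⟨-, hjK⟩
      rw [← Finset.mul_prod_erase K x hjK, ← Finset.card_erase_add_one hjK, pow_succ]
      ring
  rw [h_without, h_with, ← Finset.mul_sum]
  ring

lemma cliquePoly_singleton (v : V) (x : V → ℝ) : cliquePoly G {v} x = 1 - x v := by
  simpa [cliquePoly_empty] using
    cliquePoly_eq_erase_sub_mul G (Finset.mem_singleton_self v) x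

lemma cliquePoly_congr {W : Finset V} {x y : V → ℝ} (h : ∀ v ∈ W, x v = y v) :
    cliquePoly G W x = cliquePoly G W y := by
  refine Finset.sum_congr rfl fun K hK => congrArg _ (Finset.prod_congr rfl fun v hv => ?_)
  exact h v ((Finset.mem_powerset.1 (Finset.mem_filter.1 hK).1) hv)

lemma differentiable_cliquePoly (W : Finset V) : Differentiable ℝ (cliquePoly G W) := by
  unfold cliquePoly
  fun_prop

lemma fderiv_cliquePoly_single {W : Finset V} {j : V} (hj : j ∈ W) (x : V → ℝ) :
    fderiv ℝ (cliquePoly G W) x (Pi.single j 1) =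
      -cliquePoly G ((W.erase j).filter (G.Adj j)) x := by
  set N := (W.erase j).filter (G.Adj j)
  have hjN : j ∉ N := fun h => Finset.notMem_erase j W (Finset.mem_of_mem_filter j h)
  have h_line : (fun t : ℝ => cliquePoly G W (x + t • Pi.single j 1)) =
      fun t => cliquePoly G (W.erase j) x - (x j + t) * cliquePoly G N x := by
    funext t
    have h_off : ∀ v ≠ j, (x + t • Pi.single j 1 : V → ℝ) v = x v := fun v hv => by
      simp [hv]
    rw [cliquePoly_eq_erase_sub_mul G hj,
      cliquePoly_congr G fun v hv => h_off v (Finset.ne_of_mem_erase hv),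
      cliquePoly_congr G (W := N) fun v hv => h_off v (ne_of_mem_of_not_mem hv hjN)]
    simp
  have h_deriv : HasDerivAt
      (fun t : ℝ => cliquePoly G (W.erase j) x - (x j + t) * cliquePoly G N x)
      (-cliquePoly G N x) 0 := by
    simpa using (((hasDerivAt_id (0 : ℝ)).const_add (x j)).mul_const
      (cliquePoly G N x)).const_sub (cliquePoly G (W.erase j) x)
  rw [← (differentiable_cliquePoly G W x).lineDeriv_eq_fderiv, lineDeriv, h_line,
    h_deriv.deriv]

lemma cliquePoly_nonneg_of_mem_closure {x : V → ℝ} (hx : x ∈ closure (regionR G))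
    (W : Finset V) : 0 ≤ cliquePoly G W x :=
  closure_minimal (fun _ hy => (hy.2 W).le)
    (isClosed_le continuous_const (differentiable_cliquePoly G W).continuous) hx

lemma mem_interior_regionR {x : V → ℝ} (hpos : ∀ v, 0 < x v)
    (hK : ∀ W : Finset V, 0 < cliquePoly G W x) : x ∈ interior (regionR G) := by
  have hlt : ∀ v, x v < 1 := fun v => by
    linarith [cliquePoly_singleton G v x ▸ hK {v}]
  set U := {y : V → ℝ | ∀ v, 0 < y v ∧ y v < 1} ∩ {y | ∀ W : Finset V, 0 < cliquePoly G W y}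
  have hU : IsOpen U := by
    simp only [U, Set.ofPred_forall]
    exact .inter (isOpen_iInter_of_finite fun v =>
        (isOpen_lt continuous_const (continuous_apply v)).inter
          (isOpen_lt (continuous_apply v) continuous_const))
      (isOpen_iInter_of_finite fun W =>
        isOpen_lt continuous_const (differentiable_cliquePoly G W).continuous)
  have hUR : U ⊆ regionR G := fun y ⟨hy, hyK⟩ => ⟨fun v => ⟨(hy v).1.le, (hy v).2.le⟩, hyK⟩
  exact mem_interior.2 ⟨U, hUR, hU, fun v => ⟨hpos v, hlt v⟩, hK⟩

lemma adj_of_minimal_cliquePoly_eq_zero {x : V → ℝ} {W : Finset V}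
    (hW : Minimal (fun W => cliquePoly G W x = 0) W) {j : V} (hj : j ∉ W) (hxj : 0 < x j)
    (hnn : ∀ W', 0 ≤ cliquePoly G W' x) : ∀ w ∈ W, G.Adj j w := by
  set N := W.filter (G.Adj j)
  have h_insert := cliquePoly_eq_erase_sub_mul G (Finset.mem_insert_self j W) x
  rw [Finset.erase_insert hj, hW.prop] at h_insert
  have hN0 : cliquePoly G N x = 0 := by
    nlinarith [hnn (insert j W), hnn N]
  have hNW : N = W := by
    by_contra hne
    exact hW.not_prop_of_lt (lt_of_le_of_ne (Finset.filter_subset _ W) hne) hN0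
  intro w hw
  exact (Finset.mem_filter.1 (hNW ▸ hw)).2

end

/-- Proposition 4.6: if `G` is join-irreducible, then at every strictly
positive point `x` of the frontier of `R(G)` one has `𝕶_G(x) = 0`, `𝕶_{G,V'}(x) > 0` for
all proper `V' ⊊ V`, and all partial derivatives of `𝕶_G` are strictly negative at `x`. -/
theorem frontier_regionR_of_joinIrreducible (G : SimpleGraph V)
    (hirr : ¬ ∃ A : Finset V, A.Nonempty ∧ Aᶜ.Nonempty ∧ ∀ a ∈ A, ∀ b ∈ Aᶜ, G.Adj a b)
    (x : V → ℝ) (hx : x ∈ frontier (regionR G)) (hpos : ∀ v, 0 < x v) :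
    cliquePoly G Finset.univ x = 0 ∧
    (∀ V' : Finset V, V' ⊂ Finset.univ → 0 < cliquePoly G V' x) ∧
    (∀ j : V, fderiv ℝ (cliquePoly G Finset.univ) x (Pi.single j 1) < 0) := by
  have hnn := cliquePoly_nonneg_of_mem_closure G hx.1
  have h_zero : ∃ W : Finset V, cliquePoly G W x = 0 := by
    by_contra! h
    exact hx.2 (mem_interior_regionR G hpos fun W => (hnn W).lt_of_ne (h W).symm)
  obtain ⟨W, hW⟩ := exists_minimal_of_wellFoundedLT _ h_zero
  have h_proper : ∀ W' ⊂ W, 0 < cliquePoly G W' x := fun W' hW' =>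
    (hnn W').lt_of_ne (Ne.symm (hW.not_prop_of_lt hW'))
  have hW_ne : W.Nonempty := by
    rw [Finset.nonempty_iff_ne_empty]
    rintro rfl
    simpa [cliquePoly_empty] using hW.prop
  obtain rfl : W = Finset.univ := by
    by_contra hne
    have hWc : Wᶜ.Nonempty :=
      Finset.nonempty_iff_ne_empty.2 (mt (Finset.compl_eq_empty_iff W).1 hne)
    refine hirr ⟨W, hW_ne, hWc, fun a ha b hb => ?_⟩
    exact (adj_of_minimal_cliquePoly_eq_zero G hW (Finset.mem_compl.1 hb) (hpos b) hnn a ha).symm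
  refine ⟨hW.prop, h_proper, fun j => ?_⟩
  rw [fderiv_cliquePoly_single G (Finset.mem_univ j), neg_lt_zero]
  refine h_proper _ (Finset.ssubset_univ_iff.2 fun h => ?_)
  exact Finset.notMem_erase j _ (Finset.mem_of_mem_filter j (h ▸ Finset.mem_univ j))
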